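/- Let d₋₁, d₀ be positive integers. If there exists a semistable representation (V₋₁, V₀, f₀, f₁) of the Kronecker quiver K₂ with dim V₋₁ = d₋₁ and dim V₀ = d₀, then either d₋₁ = d₀, or there exists a positive integer k with k·d₀ = (k+1)·d₋₁, or there exists a positive integer k with k·d₋₁ = (k+1)·d₀. -/

import Mathlib

/-- A subrepresentation of a representation `f : Fin n → (V₁ →ₗ[ℂ] V₀)` of the `n`-arrow
Kronecker quiver: a pair of subspaces stable under all the maps. -/
def KroneckerSubrep {n : ℕ} {V₁ V₀ : Type} [AddCommGroup V₁] [Module ℂ V₁]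
    [AddCommGroup V₀] [Module ℂ V₀] (f : Fin n → V₁ →ₗ[ℂ] V₀)
    (W₁ : Submodule ℂ V₁) (W₀ : Submodule ℂ V₀) : Prop :=
  ∀ i, ∀ x ∈ W₁, f i x ∈ W₀

/-- Semistability of a representation of the `n`-arrow Kronecker quiver: every
subrepresentation `(W₁, W₀)` satisfies `dim V₁ · dim W₀ - dim V₀ · dim W₁ ≥ 0`. -/
def KroneckerSemistable {n : ℕ} {V₁ V₀ : Type} [AddCommGroup V₁] [Module ℂ V₁]
    [AddCommGroup V₀] [Module ℂ V₀] (f : Fin n → V₁ →ₗ[ℂ] V₀) : Prop :=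
  ∀ (W₁ : Submodule ℂ V₁) (W₀ : Submodule ℂ V₀), KroneckerSubrep f W₁ W₀ →
    0 ≤ (Module.finrank ℂ V₁ : ℤ) * (Module.finrank ℂ ↥W₀ : ℤ) -
        (Module.finrank ℂ V₀ : ℤ) * (Module.finrank ℂ ↥W₁ : ℤ)

/-!
Write `F = f₀ + f₁ : V₁ × V₁ → V₀`. If `0 < d₁ < d₀`, semistability tested on `(V₁, im F)` forces
`F` to be onto, so `K = ker F` has dimension `2 d₁ - d₀ < d₁`. The two projections `K → V₁` form
the reflected representation (Bernstein–Gelfand–Ponomarev), which is again semistable, now of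
dimension vector `(2 d₁ - d₀, d₁)`. Strong induction on `d₀` puts `(d₁, d₀)` on a line
`k d₀ = (k + 1) d₁`, the base case `K = 0` being `d₀ = 2 d₁`. The case `d₁ > d₀` is dual: the
transposed maps `V₀* → V₁*` form a semistable representation.
-/

open Module LinearMap

section

variable {n : ℕ} {V₁ V₀ : Type} [AddCommGroup V₁] [Module ℂ V₁] [AddCommGroup V₀] [Module ℂ V₀]

def kroneckerSum (f : Fin n → V₁ →ₗ[ℂ] V₀) : (Fin n → V₁) →ₗ[ℂ] V₀ :=
  lsum ℂ (fun _ => V₁) ℂ f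

def kroneckerReflection (f : Fin n → V₁ →ₗ[ℂ] V₀) : Fin n → ker (kroneckerSum f) →ₗ[ℂ] V₁ :=
  fun i => (proj i).comp (ker (kroneckerSum f)).subtype

theorem kroneckerSum_apply (f : Fin n → V₁ →ₗ[ℂ] V₀) (x : Fin n → V₁) :
    kroneckerSum f x = ∑ i, f i (x i) := by
  simp [kroneckerSum]

theorem apply_mem_range_kroneckerSum (f : Fin n → V₁ →ₗ[ℂ] V₀) (i : Fin n) (x : V₁) :
    f i x ∈ range (kroneckerSum f) :=
  ⟨Pi.single i x, lsum_piSingle ℂ _ ℂ f i x⟩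

theorem finrank_range_add_finrank_ker_kroneckerSum [FiniteDimensional ℂ V₁]
    (f : Fin n → V₁ →ₗ[ℂ] V₀) :
    finrank ℂ (range (kroneckerSum f)) + finrank ℂ (ker (kroneckerSum f)) =
      n * finrank ℂ V₁ := by
  rw [finrank_range_add_finrank_ker, finrank_pi_fintype]
  simp

theorem KroneckerSemistable.range_kroneckerSum_eq_top [FiniteDimensional ℂ V₀]
    {f : Fin n → V₁ →ₗ[ℂ] V₀} (hs : KroneckerSemistable f) (hpos : 0 < finrank ℂ V₁) :
    range (kroneckerSum f) = ⊤ := by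
  have hsub : KroneckerSubrep f ⊤ (range (kroneckerSum f)) :=
    fun i x _ => apply_mem_range_kroneckerSum f i x
  have h := hs _ _ hsub
  rw [finrank_top] at h
  apply Submodule.eq_top_of_finrank_eq
  have hle := Submodule.finrank_le (range (kroneckerSum f))
  have hge : (finrank ℂ V₀ : ℤ) ≤ finrank ℂ (range (kroneckerSum f)) :=
    le_of_mul_le_mul_left (a := (finrank ℂ V₁ : ℤ)) (by linarith) (by exact_mod_cast hpos)
  omega

theorem KroneckerSemistable.kroneckerReflection [FiniteDimensional ℂ V₁] [FiniteDimensional ℂ V₀]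
    {f : Fin n → V₁ →ₗ[ℂ] V₀} (hs : KroneckerSemistable f) :
    KroneckerSemistable (kroneckerReflection f) := by
  intro U₁ U₀ hU
  set fU : Fin n → U₀ →ₗ[ℂ] V₀ := fun i => (f i).comp U₀.subtype
  have hsub : KroneckerSubrep f U₀ (range (kroneckerSum fU)) :=
    fun i x hx => apply_mem_range_kroneckerSum fU i ⟨x, hx⟩
  have hmain := hs _ _ hsub
  have hker : ∀ u : U₁, (fun i => (⟨(u : ker (kroneckerSum f)).1 i, hU i u u.2⟩ : U₀)) ∈
      ker (kroneckerSum fU) := fun u => by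
    rw [mem_ker, kroneckerSum_apply]
    exact (kroneckerSum_apply f u).symm.trans (map_coe_ker _ _)
  -- `ι` gives `dim U₁ ≤ n dim U₀ - dim W₀` for `W₀ = range (kroneckerSum fU)`; together with
  -- `dim K ≥ n d₁ - d₀` this reduces the claim to `hmain`
  let ι : U₁ →ₗ[ℂ] ker (kroneckerSum fU) := codRestrict _ (LinearMap.pi fun i =>
    codRestrict U₀ ((_root_.kroneckerReflection f i).comp U₁.subtype) fun u => hU i u u.2) hker
  have hι : Function.Injective ι := fun u v huv => by
    ext i
    exact congrArg (fun w : ker (kroneckerSum fU) => ((w : Fin n → U₀) i : V₁)) huv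
  have hU₁ := finrank_le_finrank_of_injective hι
  have hrangeF := Submodule.finrank_le (range (kroneckerSum f))
  have hF := finrank_range_add_finrank_ker_kroneckerSum f
  have hFU := finrank_range_add_finrank_ker_kroneckerSum fU
  zify at hU₁ hrangeF hF hFU
  nlinarith [mul_le_mul_of_nonneg_right hrangeF (Nat.cast_nonneg (α := ℤ) (finrank ℂ U₀)),
    mul_le_mul_of_nonneg_left hU₁ (Nat.cast_nonneg (α := ℤ) (finrank ℂ V₁))]

theorem KroneckerSemistable.dualMap [FiniteDimensional ℂ V₁] [FiniteDimensional ℂ V₀]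
    {f : Fin n → V₁ →ₗ[ℂ] V₀} (hs : KroneckerSemistable f) :
    KroneckerSemistable fun i => (f i).dualMap := by
  intro W₁ W₀ hW
  have hsub : KroneckerSubrep f W₀.dualCoannihilator W₁.dualCoannihilator :=
    fun i x hx => (Submodule.mem_dualCoannihilator _).2 fun φ hφ =>
      (Submodule.mem_dualCoannihilator x).1 hx _ (hW i φ hφ)
  have h := hs _ _ hsub
  have e₁ := Subspace.finrank_add_finrank_dualCoannihilator_eq W₁
  have e₀ := Subspace.finrank_add_finrank_dualCoannihilator_eq W₀
  rw [Subspace.dual_finrank_eq, Subspace.dual_finrank_eq]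
  zify at e₁ e₀
  linear_combination h + (finrank ℂ V₁ : ℤ) * e₁ - (finrank ℂ V₀ : ℤ) * e₀

end

theorem KroneckerSemistable.exists_of_finrank_lt {V₁ V₀ : Type} [AddCommGroup V₁] [Module ℂ V₁]
    [FiniteDimensional ℂ V₁] [AddCommGroup V₀] [Module ℂ V₀] [FiniteDimensional ℂ V₀]
    {f : Fin 2 → V₁ →ₗ[ℂ] V₀} (hs : KroneckerSemistable f) (hpos : 0 < finrank ℂ V₁)
    (hlt : finrank ℂ V₁ < finrank ℂ V₀) :
    ∃ k : ℕ, 0 < k ∧ k * finrank ℂ V₀ = (k + 1) * finrank ℂ V₁ := by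
  induction hd : finrank ℂ V₀ using Nat.strong_induction_on generalizing V₁ V₀ with
  | _ d₀ ih =>
    subst hd
    have hK := finrank_range_add_finrank_ker_kroneckerSum f
    rw [hs.range_kroneckerSum_eq_top hpos, finrank_top] at hK
    rcases Nat.eq_zero_or_pos (finrank ℂ (ker (kroneckerSum f))) with hK₀ | hKpos
    · exact ⟨1, one_pos, by omega⟩
    · obtain ⟨k, hk, hkd⟩ := ih _ hlt hs.kroneckerReflection hKpos (by omega) rfl
      refine ⟨k + 1, k.succ_pos, ?_⟩
      zify at hK hkd ⊢
      linear_combination (k + 1 : ℤ) * hK + hkd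

/-- If there exists a semistable representation of `K₂` of dimension
vector `(d₋₁, d₀)` with `d₋₁, d₀ > 0`, then either `d₋₁ = d₀`, or `k·d₀ = (k+1)·d₋₁`
for some positive integer `k`, or `k·d₋₁ = (k+1)·d₀` for some positive integer `k`. -/
theorem semistable_dims_on_lines (d₁ d₀ : ℕ) (hd1 : 0 < d₁) (hd0 : 0 < d₀)
    (V₁ V₀ : Type) [AddCommGroup V₁] [Module ℂ V₁] [FiniteDimensional ℂ V₁]
    [AddCommGroup V₀] [Module ℂ V₀] [FiniteDimensional ℂ V₀]
    (f : Fin 2 → V₁ →ₗ[ℂ] V₀)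
    (h1 : Module.finrank ℂ V₁ = d₁) (h0 : Module.finrank ℂ V₀ = d₀)
    (hs : KroneckerSemistable f) :
    d₁ = d₀ ∨ (∃ k : ℕ, 0 < k ∧ k * d₀ = (k + 1) * d₁) ∨
      (∃ k : ℕ, 0 < k ∧ k * d₁ = (k + 1) * d₀) := by
  subst h1 h0
  rcases lt_trichotomy (finrank ℂ V₁) (finrank ℂ V₀) with hlt | heq | hgt
  · exact Or.inr (Or.inl (hs.exists_of_finrank_lt hd1 hlt))
  · exact Or.inl heq
  · simp only [← Subspace.dual_finrank_eq (K := ℂ) (V := V₀),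
      ← Subspace.dual_finrank_eq (K := ℂ) (V := V₁)] at hd0 hgt ⊢
    exact Or.inr (Or.inr (hs.dualMap.exists_of_finrank_lt hd0 hgt))
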